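/- Let B be the ball algebra on the closed unit ball of ℂ^d. For f ∈ B and n ∈ ℕ, define the n-th homogeneous component f_n : closed ball → ℂ by f_n(z) = (1/(2π)) ∫₀^{2π} f(e^{iθ} z) e^{−inθ} dθ. Then a closed ideal J ⊆ B satisfies (f_n ∈ J for all f ∈ J and all n ∈ ℕ) if and only if (for every f ∈ J and every t in the open unit disc 𝔻 ⊆ ℂ, the function z ↦ f(t z) belongs to J). -/

import Mathlib

open MvPolynomial Metric

noncomputable section

abbrev Cd (d : ℕ) := EuclideanSpace ℂ (Fin d)

abbrev CBall (d : ℕ) : Set (Cd d) := Metric.closedBall (0 : Cd d) 1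

instance (d : ℕ) : CompactSpace (CBall d) :=
  isCompact_iff_compactSpace.mp (isCompact_closedBall _ _)

/-- The `i`-th coordinate function on the closed unit ball. -/
def coordFn (d : ℕ) (i : Fin d) : C(CBall d, ℂ) :=
  ⟨fun z => (z : Cd d) i, by exact (continuous_apply i).comp ((PiLp.continuous_ofLp _ _).comp continuous_subtype_val)⟩

/-- Restriction of a polynomial to the closed unit ball, as an element of
`C(closedBall, ℂ)`. -/
def polyMap (d : ℕ) : MvPolynomial (Fin d) ℂ →ₐ[ℂ] C(CBall d, ℂ) :=
  aeval (coordFn d)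

/-- The ball algebra: the closure, in the Banach algebra of continuous functions on
the closed unit ball of ℂ^d with the supremum norm, of the restrictions of
polynomials. -/
def ballAlg (d : ℕ) : Set C(CBall d, ℂ) := closure (Set.range (polyMap d))

/-- `J` is an ideal of the ball algebra `B`. -/
def IsIdealOfBallAlg (d : ℕ) (J : Set C(CBall d, ℂ)) : Prop :=
  J ⊆ ballAlg d ∧ (0 : C(CBall d, ℂ)) ∈ J ∧
    (∀ f ∈ J, ∀ g ∈ J, f + g ∈ J) ∧ (∀ f ∈ J, ∀ g ∈ ballAlg d, g * f ∈ J)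

/-- The self-map of the closed ball given by `z ↦ t z` for `‖t‖ ≤ 1`. -/
def dilatePt (d : ℕ) (t : ℂ) (ht : ‖t‖ ≤ 1) : C(CBall d, CBall d) :=
  ⟨fun z => ⟨t • (z : Cd d), by
      have hz : ‖(z : Cd d)‖ ≤ 1 := mem_closedBall_zero_iff.mp z.2
      show t • (z : Cd d) ∈ Metric.closedBall 0 1
      rw [mem_closedBall_zero_iff, norm_smul]
      exact mul_le_one₀ ht (norm_nonneg _) hz⟩,
    by exact Continuous.subtype_mk (continuous_subtype_val.const_smul t) _⟩

/-- The dilation `f ↦ (z ↦ f (t z))` on continuous functions on the closed ball. -/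
def dilateFn (d : ℕ) (t : ℂ) (ht : ‖t‖ ≤ 1) (f : C(CBall d, ℂ)) : C(CBall d, ℂ) :=
  f.comp (dilatePt d t ht)

/-- A closed ideal of the ball algebra is homogeneous if it is invariant under all
dilations `z ↦ t z`, `|t| < 1`. -/
def IsHomogBallIdeal (d : ℕ) (J : Set C(CBall d, ℂ)) : Prop :=
  ∀ f ∈ J, ∀ t : ℂ, ∀ ht : ‖t‖ < 1, dilateFn d t ht.le f ∈ J

/-- Rotation `z ↦ e^{iθ} z` on the closed ball. -/
def rotPt (d : ℕ) (θ : ℝ) (z : CBall d) : CBall d :=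
  ⟨Complex.exp (θ * Complex.I) • (z : Cd d), by
    have hz : ‖(z : Cd d)‖ ≤ 1 := mem_closedBall_zero_iff.mp z.2
    show Complex.exp (θ * Complex.I) • (z : Cd d) ∈ Metric.closedBall 0 1
    rw [mem_closedBall_zero_iff, norm_smul]
    have h1 : ‖Complex.exp (θ * Complex.I)‖ = 1 := by
      simp [Complex.norm_exp_ofReal_mul_I θ]
    rw [h1, one_mul]
    exact hz⟩

/-- The `n`-th homogeneous component of `f` at `z`, given by the circle average
`f_n(z) = (1/(2π)) ∫₀^{2π} f(e^{iθ} z) e^{−inθ} dθ`. -/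
def circAvg (d : ℕ) (n : ℕ) (f : C(CBall d, ℂ)) (z : CBall d) : ℂ :=
  (2 * Real.pi)⁻¹ •
    ∫ θ in (0 : ℝ)..(2 * Real.pi), f (rotPt d θ z) * Complex.exp (-(n : ℂ) * θ * Complex.I)


/-!
For `f` in the ball algebra and `|t| < 1` one has `f (t z) = ∑ tⁿ fₙ(z)` with `‖fₙ‖ ≤ ‖f‖`: for a
polynomial `fₙ` is its homogeneous part of degree `n`, and both sides are continuous linear in `f`.
Hence if `J` contains all `fₙ`, it contains the dilate `f (t ·)` as a limit of partial sums.
Conversely, `fₙ` is the `C(CBall d, ℂ)`-valued integral `(2π)⁻¹ ∫ e^{-inθ} f (e^{iθ} ·) dθ`; each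
rotation `f (e^{iθ} ·)` is a limit of dilations `f (t ·)` with `|t| < 1`, so the integrand takes
values in the closed subspace `J`, and so does the integral.
-/

open Complex

namespace MvPolynomial

theorem IsHomogeneous.aeval_smul {σ R A : Type*} [CommSemiring R] [CommSemiring A] [Algebra R A]
    {φ : MvPolynomial σ R} {n : ℕ} (hφ : φ.IsHomogeneous n) (t : R) (x : σ → A) :
    MvPolynomial.aeval (t • x) φ = t ^ n • MvPolynomial.aeval x φ := by
  simp only [aeval_def, eval₂_eq, Finset.smul_sum]
  refine Finset.sum_congr rfl fun m hm => ?_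
  rw [← hφ (mem_support_iff.mp hm)]
  simp only [Pi.smul_apply, smul_pow, Finset.prod_smul, Finset.prod_pow_eq_pow_sum,
    mul_smul_comm, Pi.one_def, ← Finsupp.degree_eq_weight_one, Finsupp.degree_apply]

theorem aeval_smul_eq_sum_homogeneousComponent {σ R A : Type*} [CommSemiring R] [CommSemiring A]
    [Algebra R A] (φ : MvPolynomial σ R) (t : R) (x : σ → A) :
    aeval (t • x) φ =
      ∑ m ∈ Finset.range (φ.totalDegree + 1), t ^ m • aeval x (homogeneousComponent m φ) := by
  conv_lhs => rw [← sum_homogeneousComponent φ]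
  simp only [map_sum, IsHomogeneous.aeval_smul (homogeneousComponent_isHomogeneous _ φ)]

end MvPolynomial

theorem integral_exp_int_mul_I (k : ℤ) :
    ∫ θ in (0 : ℝ)..2 * Real.pi, exp (k * θ * I) = if k = 0 then (2 * Real.pi : ℂ) else 0 := by
  split_ifs with hk
  · simp [hk]
  · have hkI : (k : ℂ) * I ≠ 0 := mul_ne_zero (Int.cast_ne_zero.mpr hk) I_ne_zero
    have hperiod : exp (k * I * (2 * Real.pi : ℝ)) = 1 := by
      rw [← exp_int_mul_two_pi_mul_I k]; push_cast; ring_nf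
    simp_rw [mul_right_comm _ _ I]
    rw [integral_exp_mul_complex hkI, hperiod]
    simp

lemma coordFn_comp_dilatePt (d : ℕ) (t : ℂ) (ht : ‖t‖ ≤ 1) (i : Fin d) :
    (coordFn d i).comp (dilatePt d t ht) = t • coordFn d i := rfl

lemma polyMap_comp_dilatePt (d : ℕ) (p : MvPolynomial (Fin d) ℂ) (t : ℂ) (ht : ‖t‖ ≤ 1) :
    (polyMap d p).comp (dilatePt d t ht) =
      ∑ m ∈ Finset.range (p.totalDegree + 1), t ^ m • polyMap d (homogeneousComponent m p) := by
  rw [← ContinuousMap.compRightAlgHom_apply ℂ ℂ, polyMap, comp_aeval_apply]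
  simp only [ContinuousMap.compRightAlgHom_apply, coordFn_comp_dilatePt]
  exact aeval_smul_eq_sum_homogeneousComponent p t (coordFn d)

lemma norm_dilateFn_le (d : ℕ) (t : ℂ) (ht : ‖t‖ ≤ 1) (f : C(CBall d, ℂ)) :
    ‖dilateFn d t ht f‖ ≤ ‖f‖ :=
  (ContinuousMap.norm_le _ (norm_nonneg f)).2 fun _ => f.norm_coe_le_norm _

def dilationFamily (d : ℕ) (f : C(CBall d, ℂ)) : C(closedBall (0 : ℂ) 1, C(CBall d, ℂ)) :=
  ContinuousMap.curry <| f.comp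
    ⟨fun p => dilatePt d p.1 (mem_closedBall_zero_iff.mp p.1.2) p.2,
      Continuous.subtype_mk (by fun_prop) _⟩

lemma dilationFamily_apply (d : ℕ) (f : C(CBall d, ℂ)) (t : closedBall (0 : ℂ) 1) :
    dilationFamily d f t = dilateFn d t (mem_closedBall_zero_iff.mp t.2) f := rfl

def expMulI : C(ℝ, closedBall (0 : ℂ) 1) :=
  ⟨fun θ => ⟨exp (θ * I), by simp [norm_exp_ofReal_mul_I]⟩, by fun_prop⟩

def homogComponent (d n : ℕ) (f : C(CBall d, ℂ)) : C(CBall d, ℂ) :=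
  (2 * Real.pi)⁻¹ •
    ∫ θ in (0 : ℝ)..2 * Real.pi, exp (-(n : ℂ) * θ * I) • dilationFamily d f (expMulI θ)

lemma continuous_homogComponent_integrand (d n : ℕ) (f : C(CBall d, ℂ)) :
    Continuous fun θ : ℝ => exp (-(n : ℂ) * θ * I) • dilationFamily d f (expMulI θ) := by
  fun_prop

lemma homogComponent_apply (d n : ℕ) (f : C(CBall d, ℂ)) (z : CBall d) :
    homogComponent d n f z = circAvg d n f z := by
  rw [homogComponent, ContinuousMap.smul_apply, ← ContinuousMap.evalCLM_apply ℂ z,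
    ← ContinuousLinearMap.intervalIntegral_comp_comm _
      ((continuous_homogComponent_integrand d n f).intervalIntegrable _ _)]
  refine congrArg _ (intervalIntegral.integral_congr fun θ _ => mul_comm _ _)

lemma norm_homogComponent_le (d n : ℕ) (f : C(CBall d, ℂ)) : ‖homogComponent d n f‖ ≤ ‖f‖ := by
  have hbound : ∀ θ : ℝ, ‖exp (-(n : ℂ) * θ * I) • dilationFamily d f (expMulI θ)‖ ≤ ‖f‖ :=
    fun θ => by
      rw [norm_smul, dilationFamily_apply]
      simpa [norm_exp] using norm_dilateFn_le d _ _ f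
  have hπ : (0 : ℝ) < 2 * Real.pi := by positivity
  calc ‖homogComponent d n f‖
      ≤ (2 * Real.pi)⁻¹ * (‖f‖ * |2 * Real.pi - 0|) := by
        rw [homogComponent, norm_smul, Real.norm_of_nonneg (by positivity)]
        gcongr
        exact intervalIntegral.norm_integral_le_of_norm_le_const fun θ _ => hbound θ
    _ = ‖f‖ := by rw [sub_zero, abs_of_pos hπ]; field_simp

def homogComponentCLM (d n : ℕ) : C(CBall d, ℂ) →L[ℂ] C(CBall d, ℂ) :=
  LinearMap.mkContinuous
    { toFun := homogComponent d n
      map_add' := fun f g => by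
        simp only [homogComponent, ← smul_add]
        rw [← intervalIntegral.integral_add
          ((continuous_homogComponent_integrand d n f).intervalIntegrable _ _)
          ((continuous_homogComponent_integrand d n g).intervalIntegrable _ _)]
        simp only [dilationFamily_apply, dilateFn, ContinuousMap.add_comp, smul_add]
      map_smul' := fun c f => by
        simp only [homogComponent, RingHom.id_apply, smul_comm c, ← intervalIntegral.integral_smul]
        simp only [dilationFamily_apply, dilateFn, ContinuousMap.smul_comp] }
    1 fun f => (one_mul ‖f‖).symm ▸ norm_homogComponent_le d n f

lemma norm_homogComponentCLM_le (d n : ℕ) : ‖homogComponentCLM d n‖ ≤ 1 :=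
  LinearMap.mkContinuous_norm_le _ zero_le_one _

lemma integral_exp_neg_mul_exp_pow (m n : ℕ) :
    ∫ θ in (0 : ℝ)..2 * Real.pi, exp (-(n : ℂ) * θ * I) * exp (θ * I) ^ m =
      if m = n then ((2 * Real.pi : ℝ) : ℂ) else 0 := by
  have h : ∀ θ : ℝ, exp (-(n : ℂ) * θ * I) * exp (θ * I) ^ m = exp (((m - n : ℤ) : ℂ) * θ * I) :=
    fun θ => by rw [← exp_nat_mul, ← exp_add]; push_cast; ring_nf
  simp_rw [h, integral_exp_int_mul_I, sub_eq_zero, Nat.cast_inj]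
  push_cast; rfl

lemma homogComponent_polyMap (d n : ℕ) (p : MvPolynomial (Fin d) ℂ) :
    homogComponent d n (polyMap d p) = polyMap d (homogeneousComponent n p) := by
  have hexpand : ∀ θ : ℝ, exp (-(n : ℂ) * θ * I) • dilationFamily d (polyMap d p) (expMulI θ) =
      ∑ m ∈ Finset.range (p.totalDegree + 1),
        (exp (-(n : ℂ) * θ * I) * exp (θ * I) ^ m) • polyMap d (homogeneousComponent m p) := by
    intro θ
    rw [dilationFamily_apply, dilateFn, polyMap_comp_dilatePt, Finset.smul_sum]
    simp only [smul_smul]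
    rfl
  simp_rw [homogComponent, hexpand]
  rw [intervalIntegral.integral_finsetSum fun m _ =>
    (by fun_prop : Continuous _).intervalIntegrable _ _]
  simp_rw [intervalIntegral.integral_smul_const, integral_exp_neg_mul_exp_pow, ite_smul, zero_smul,
    Finset.sum_ite_eq', Finset.mem_range, Complex.coe_smul]
  split_ifs with hn
  · rw [smul_smul, inv_mul_cancel₀ (by positivity), one_smul]
  · rw [homogeneousComponent_eq_zero _ _ (by omega), map_zero, smul_zero]

theorem hasSum_homogComponent {d : ℕ} {f : C(CBall d, ℂ)} (hf : f ∈ ballAlg d) {t : ℂ}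
    (ht : ‖t‖ < 1) : HasSum (fun n => t ^ n • homogComponent d n f) (dilateFn d t ht.le f) := by
  have hsum : Summable fun n => t ^ n • homogComponentCLM d n := by
    refine .of_norm_bounded (summable_geometric_of_lt_one (norm_nonneg t) ht) fun n => ?_
    rw [norm_smul, norm_pow]
    exact mul_le_of_le_one_right (by positivity) (norm_homogComponentCLM_le d n)
  obtain ⟨Ψ, hΨsum⟩ := hsum
  have hΨ (g : C(CBall d, ℂ)) : HasSum (fun n => t ^ n • homogComponent d n g) (Ψ g) := by
    have := (ContinuousLinearMap.apply ℂ C(CBall d, ℂ) g).hasSum hΨsum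
    exact this
  have hpoly : ∀ p, Ψ (polyMap d p) = dilateFn d t ht.le (polyMap d p) := fun p => by
    refine (hΨ _).unique ?_
    simp only [homogComponent_polyMap, dilateFn, polyMap_comp_dilatePt]
    refine hasSum_sum_of_ne_finset_zero fun m hm => ?_
    rw [homogeneousComponent_eq_zero _ _ (by simpa using hm), map_zero, smul_zero]
  have hagree : Set.EqOn Ψ (dilateFn d t ht.le) (ballAlg d) := by
    refine Set.EqOn.closure ?_ Ψ.continuous (ContinuousMap.continuous_precomp _)
    rintro _ ⟨p, rfl⟩
    exact hpoly p
  exact hagree hf ▸ hΨ f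

namespace IsIdealOfBallAlg

variable {d : ℕ} {J : Set C(CBall d, ℂ)}

lemma smul_mem (hJ : IsIdealOfBallAlg d J) (c : ℂ) {f : C(CBall d, ℂ)} (hf : f ∈ J) :
    c • f ∈ J := by
  have hc : polyMap d (MvPolynomial.C c) ∈ ballAlg d := subset_closure ⟨_, rfl⟩
  simpa [polyMap, Algebra.smul_def] using hJ.2.2.2 f hf _ hc

def toSubmodule (hJ : IsIdealOfBallAlg d J) : Submodule ℂ C(CBall d, ℂ) where
  carrier := J
  add_mem' := fun ha hb => hJ.2.2.1 _ ha _ hb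
  zero_mem' := hJ.2.1
  smul_mem' := hJ.smul_mem

end IsIdealOfBallAlg

theorem Submodule.intervalIntegral_mem_of_isClosed {E : Type*} [NormedAddCommGroup E]
    [NormedSpace ℝ E] [CompleteSpace E] {S : Submodule ℝ E} (hS : IsClosed (S : Set E))
    {f : ℝ → E} (hf : Continuous f) (hfS : ∀ x, f x ∈ S) (a b : ℝ) : ∫ x in a..b, f x ∈ S := by
  have : CompleteSpace S := hS.completeSpace_coe
  let g : ℝ → S := fun x => ⟨f x, hfS x⟩
  have hg : Continuous g := hf.subtype_mk hfS
  rw [show ∫ x in a..b, f x = S.subtypeL (∫ x in a..b, g x) from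
    S.subtypeL.intervalIntegral_comp_comm (μ := MeasureTheory.volume)
      (hg.intervalIntegrable a b)]
  exact Subtype.prop _

lemma dense_coe_preimage_ball {E : Type*} [NormedAddCommGroup E] [NormedSpace ℝ E] (x : E)
    {r : ℝ} (hr : r ≠ 0) : Dense ((↑) ⁻¹' ball x r : Set (closedBall x r)) := by
  rw [Subtype.dense_iff, Subtype.image_preimage_coe,
    Set.inter_eq_right.mpr ball_subset_closedBall, closure_ball x hr]

namespace IsHomogBallIdeal

variable {d : ℕ} {J : Set C(CBall d, ℂ)}

theorem dilateFn_mem (hom : IsHomogBallIdeal d J) (hJcl : IsClosed J) {f : C(CBall d, ℂ)}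
    (hf : f ∈ J) {t : ℂ} (ht : ‖t‖ ≤ 1) : dilateFn d t ht f ∈ J :=
  (dense_coe_preimage_ball (0 : ℂ) one_ne_zero).induction (P := fun s => dilationFamily d f s ∈ J)
    (fun s hs => hom f hf s (mem_ball_zero_iff.mp hs))
    (hJcl.preimage (dilationFamily d f).continuous) ⟨t, mem_closedBall_zero_iff.mpr ht⟩

theorem homogComponent_mem (hom : IsHomogBallIdeal d J) (hJ : IsIdealOfBallAlg d J)
    (hJcl : IsClosed J) {f : C(CBall d, ℂ)} (hf : f ∈ J) (n : ℕ) : homogComponent d n f ∈ J := by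
  let S := hJ.toSubmodule.restrictScalars ℝ
  have hS : IsClosed (S : Set C(CBall d, ℂ)) := hJcl
  refine S.smul_mem _ (S.intervalIntegral_mem_of_isClosed hS
    (continuous_homogComponent_integrand d n f) (fun θ => ?_) _ _)
  exact hJ.smul_mem _ (hom.dilateFn_mem hJcl hf (mem_closedBall_zero_iff.mp (expMulI θ).2))

end IsHomogBallIdeal

theorem isHomogBallIdeal_of_homogComponent_mem {d : ℕ} {J : Set C(CBall d, ℂ)}
    (hJ : IsIdealOfBallAlg d J) (hJcl : IsClosed J)
    (h : ∀ f ∈ J, ∀ n, homogComponent d n f ∈ J) : IsHomogBallIdeal d J := by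
  intro f hf t ht
  rw [← (hasSum_homogComponent (hJ.1 hf) ht).tsum_eq]
  exact tsum_mem (s := hJ.toSubmodule) (f := fun n => t ^ n • homogComponent d n f) hJcl
    fun n => hJ.smul_mem _ (h f hf n)

/-- A closed ideal `J` of the ball algebra contains all
homogeneous components `f_n` (circle averages) of each of its elements if and only
if it is invariant under the dilations `z ↦ t z` for all `t` in the open unit
disc. -/
theorem stmt17 (d : ℕ) (J : Set C(CBall d, ℂ))
    (hJ : IsIdealOfBallAlg d J) (hJcl : IsClosed J) :
    (∀ f ∈ J, ∀ n : ℕ, ∃ g ∈ J, ∀ z : CBall d, g z = circAvg d n f z) ↔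
      IsHomogBallIdeal d J := by
  have hcomponent : ∀ f n, (∃ g ∈ J, ∀ z, g z = circAvg d n f z) ↔ homogComponent d n f ∈ J :=
    fun f n => ⟨fun ⟨g, hg, hgz⟩ => by
        rwa [ContinuousMap.ext fun z => (hgz z).trans (homogComponent_apply d n f z).symm] at hg,
      fun h => ⟨_, h, homogComponent_apply d n f⟩⟩
  simp only [hcomponent]
  exact ⟨isHomogBallIdeal_of_homogComponent_mem hJ hJcl,
    fun hom f hf n => hom.homogComponent_mem hJ hJcl hf n⟩
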